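/- Let k ≥ 2 be an integer. For every ε > 0 one has ∑_{n ≤ x} M_k(n)² ≤ x^{2 + 1/k + ε} for all sufficiently large real x. -/

import Mathlib

open Finset Real

/-- `Mk k n`: the maximal `k`-full divisor of `n`, i.e. the largest divisor `d` of `n`
such that `p^k ∣ d` for every prime `p ∣ d`. -/
def Mk (k n : ℕ) : ℕ :=
  Finset.sup (n.divisors.filter (fun d => ∀ p ∈ d.primeFactors, p ^ k ∣ d)) id

/-!
Since `M_k(n)` divides `n`, a value `d` is taken by at most `x / d` integers `n ≤ x`, so the sum
is at most `x²` times the number of `k`-full `d ≤ x`. A `k`-full `d` factors as `a ^ k * c` where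
`a ^ k` is the largest `k`-th power dividing `d`, and then `c ∣ a ^ (k - 1)`. Hence there are at
most `∑_{a ≤ x^{1/k}} τ(a^{k-1})` such `d`, which is `O(x^{1/k + δ})` by the divisor bound
`τ(m) = O(m^δ)`.
-/

lemma sum_le_card_filter_mul {P : ℕ → Prop} [DecidablePred P] {f : ℕ → ℕ} {N : ℕ}
    (hf : ∀ n ∈ Icc 1 N, f n ∈ {d ∈ n.divisors | P d}) :
    ∑ n ∈ Icc 1 N, f n ≤ #{d ∈ Icc 1 N | P d} * N := by
  have hmaps : ∀ n ∈ Icc 1 N, f n ∈ ({d ∈ Icc 1 N | P d} : Finset ℕ) := by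
    intro n hn
    obtain ⟨hdvd, hP⟩ := mem_filter.1 (hf n hn)
    obtain ⟨hfn, hn0⟩ := Nat.mem_divisors.1 hdvd
    have := Nat.le_of_dvd (Nat.pos_of_ne_zero hn0) hfn
    simp only [mem_filter, mem_Icc] at hn ⊢
    exact ⟨⟨Nat.pos_of_dvd_of_pos hfn (by omega), by omega⟩, hP⟩
  -- a value `d` is taken at most `N / d` times, since `d` divides each preimage
  have hfiber : ∀ d, #{n ∈ Icc 1 N | f n = d} * d ≤ N := by
    intro d
    have hsub : {n ∈ Icc 1 N | f n = d} ⊆ {n ∈ Ioc 0 N | d ∣ n} := by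
      intro n hn
      obtain ⟨hnN, rfl⟩ := mem_filter.1 hn
      exact mem_filter.2 ⟨mem_Ioc.2 (mem_Icc.1 hnN),
        Nat.dvd_of_mem_divisors (mem_filter.1 (hf n hnN)).1⟩
    calc #{n ∈ Icc 1 N | f n = d} * d ≤ N / d * d := by
          gcongr
          exact (card_le_card hsub).trans (Nat.Ioc_filter_dvd_card_eq_div N d).le
      _ ≤ N := Nat.div_mul_le_self N d
  rw [← sum_fiberwise_of_maps_to hmaps]
  calc ∑ d ∈ Icc 1 N with P d, ∑ n ∈ Icc 1 N with f n = d, f n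
      = ∑ d ∈ Icc 1 N with P d, #{n ∈ Icc 1 N | f n = d} * d := by
        refine sum_congr rfl fun d _ => ?_
        rw [sum_congr rfl fun n hn => (mem_filter.1 hn).2, sum_const, smul_eq_mul]
    _ ≤ ∑ d ∈ Icc 1 N with P d, N := sum_le_sum fun d _ => hfiber d
    _ = #{d ∈ Icc 1 N | P d} * N := by rw [sum_const, smul_eq_mul]

lemma sum_sq_le_card_filter_mul_sq {P : ℕ → Prop} [DecidablePred P] {f : ℕ → ℕ} {N : ℕ}
    (hf : ∀ n ∈ Icc 1 N, f n ∈ {d ∈ n.divisors | P d}) :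
    ∑ n ∈ Icc 1 N, f n ^ 2 ≤ #{d ∈ Icc 1 N | P d} * N ^ 2 := by
  have hfN : ∀ n ∈ Icc 1 N, f n ≤ N := fun n hn =>
    (Nat.divisor_le (mem_filter.1 (hf n hn)).1).trans (mem_Icc.1 hn).2
  calc ∑ n ∈ Icc 1 N, f n ^ 2 ≤ ∑ n ∈ Icc 1 N, N * f n :=
        sum_le_sum fun n hn => by rw [sq]; exact Nat.mul_le_mul_right _ (hfN n hn)
    _ = N * ∑ n ∈ Icc 1 N, f n := (mul_sum ..).symm
    _ ≤ N * (#{d ∈ Icc 1 N | P d} * N) := Nat.mul_le_mul_left _ (sum_le_card_filter_mul hf)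
    _ = #{d ∈ Icc 1 N | P d} * N ^ 2 := by ring

lemma add_one_le_mul_exp {t y : ℝ} (ht : 0 < t) (hy : 0 ≤ y) :
    y + 1 ≤ (1 + t⁻¹) * exp (t * y) := by
  have hexp := add_one_le_exp (t * y)
  have hti : t⁻¹ * (t * y) = y := by field_simp
  nlinarith [inv_pos.2 ht, mul_pos ht (inv_pos.2 ht)]

lemma add_one_le_mul_pow_rpow {δ x : ℝ} (hδ : 0 < δ) (hx : 2 ≤ x) (e : ℕ) :
    (e + 1 : ℝ) ≤ (1 + (δ * log 2)⁻¹) * (x ^ e) ^ δ := by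
  have h2 : exp (δ * log 2 * e) = ((2 : ℝ) ^ e) ^ δ := by
    rw [← rpow_natCast, ← rpow_mul zero_le_two, rpow_def_of_pos two_pos]
    ring_nf
  calc (e + 1 : ℝ) ≤ (1 + (δ * log 2)⁻¹) * exp (δ * log 2 * e) :=
        add_one_le_mul_exp (by positivity) (by positivity)
    _ ≤ (1 + (δ * log 2)⁻¹) * (x ^ e) ^ δ := by rw [h2]; gcongr

lemma add_one_le_pow_rpow {δ x : ℝ} (hδ : 0 < δ) (hx : 2 ^ δ⁻¹ ≤ x) (e : ℕ) :
    (e + 1 : ℝ) ≤ (x ^ e) ^ δ := by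
  have hx0 : 0 ≤ x := (rpow_nonneg zero_le_two _).trans hx
  have h2 : 2 ≤ x ^ δ := by
    simpa [← rpow_mul zero_le_two, inv_mul_cancel₀ hδ.ne'] using
      rpow_le_rpow (by positivity) hx hδ.le
  calc (e + 1 : ℝ) ≤ 2 ^ e := by exact_mod_cast Nat.lt_two_pow_self
    _ ≤ (x ^ δ) ^ e := by gcongr
    _ = (x ^ e) ^ δ := by
        rw [← rpow_natCast, ← rpow_natCast, ← rpow_mul hx0, ← rpow_mul hx0, mul_comm]

theorem exists_card_divisors_le_rpow {δ : ℝ} (hδ : 0 < δ) :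
    ∃ C : ℝ, ∀ m : ℕ, (#m.divisors : ℝ) ≤ C * (m : ℝ) ^ δ := by
  set A := 1 + (δ * log 2)⁻¹
  have hA : 1 ≤ A := le_add_of_nonneg_right (by positivity)
  refine ⟨A ^ ⌈(2 : ℝ) ^ δ⁻¹⌉₊, fun m => ?_⟩
  rcases eq_or_ne m 0 with rfl | hm
  · simp [zero_rpow hδ.ne']
  -- only the primes below `2 ^ δ⁻¹` cost more than `(p ^ e) ^ δ`
  set c : ℕ → ℝ := fun p => if (p : ℝ) < 2 ^ δ⁻¹ then A else 1
  have hlocal : ∀ p ∈ m.primeFactors,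
      (m.factorization p + 1 : ℝ) ≤ c p * ((p : ℝ) ^ m.factorization p) ^ δ := by
    intro p hp
    have hp2 : (2 : ℝ) ≤ p := by exact_mod_cast (Nat.prime_of_mem_primeFactors hp).two_le
    simp only [c]
    split_ifs with hsmall
    · exact add_one_le_mul_pow_rpow hδ hp2 _
    · simpa using add_one_le_pow_rpow hδ (not_lt.1 hsmall) _
  have hc : ∏ p ∈ m.primeFactors, c p ≤ A ^ ⌈(2 : ℝ) ^ δ⁻¹⌉₊ := by
    simp only [c, prod_ite, prod_const, one_pow, mul_one]
    refine pow_le_pow_right₀ hA ((card_le_card fun p hp => ?_).trans (card_range _).le)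
    exact mem_range.2 (Nat.lt_ceil.2 (mem_filter.1 hp).2)
  have hm_prod :
      ∏ p ∈ m.primeFactors, ((p : ℝ) ^ m.factorization p) ^ δ = (m : ℝ) ^ δ := by
    rw [finsetProd_rpow _ _ (fun p _ => by positivity)]
    exact_mod_cast congrArg (fun n : ℕ => (n : ℝ) ^ δ) (Nat.prod_factorization_pow_eq_self hm)
  calc (#m.divisors : ℝ) = ∏ p ∈ m.primeFactors, (m.factorization p + 1 : ℝ) := by
        rw [Nat.card_divisors hm]; push_cast; rfl
    _ ≤ ∏ p ∈ m.primeFactors, c p * ((p : ℝ) ^ m.factorization p) ^ δ :=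
        prod_le_prod (fun p _ => by positivity) hlocal
    _ ≤ A ^ ⌈(2 : ℝ) ^ δ⁻¹⌉₊ * (m : ℝ) ^ δ := by
        rw [prod_mul_distrib, hm_prod]
        gcongr

lemma card_filter_pow_le_le_rpow {k : ℕ} (hk : k ≠ 0) (N : ℕ) :
    (#{a ∈ Icc 1 N | a ^ k ≤ N} : ℝ) ≤ (N : ℝ) ^ (k⁻¹ : ℝ) := by
  have hsub : {a ∈ Icc 1 N | a ^ k ≤ N} ⊆ Icc 1 ⌊(N : ℝ) ^ (k⁻¹ : ℝ)⌋₊ := by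
    intro a ha
    simp only [mem_filter, mem_Icc] at ha ⊢
    refine ⟨ha.1.1, Nat.le_floor ?_⟩
    rw [le_rpow_inv_iff_of_pos (by positivity) (by positivity) (by positivity), rpow_natCast]
    exact_mod_cast ha.2
  calc (#{a ∈ Icc 1 N | a ^ k ≤ N} : ℝ) ≤ #(Icc 1 ⌊(N : ℝ) ^ (k⁻¹ : ℝ)⌋₊) := by
        exact_mod_cast card_le_card hsub
    _ ≤ (N : ℝ) ^ (k⁻¹ : ℝ) := by
        rw [Nat.card_Icc, Nat.add_sub_cancel]
        exact Nat.floor_le (by positivity)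

def IsFull (k d : ℕ) : Prop := ∀ p ∈ d.primeFactors, p ^ k ∣ d

instance (k : ℕ) : DecidablePred (IsFull k) := fun d =>
  inferInstanceAs (Decidable (∀ p ∈ d.primeFactors, p ^ k ∣ d))

lemma Mk_mem_filter_divisors (k : ℕ) {n : ℕ} (hn : n ≠ 0) :
    Mk k n ∈ {d ∈ n.divisors | IsFull k d} := by
  obtain ⟨d, hd, hMk⟩ := exists_mem_eq_sup {d ∈ n.divisors | IsFull k d}
    ⟨1, mem_filter.2 ⟨Nat.one_mem_divisors.2 hn, by simp [IsFull]⟩⟩ id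
  rw [show Mk k n = id d from hMk]
  exact hd

lemma IsFull.div_floorRoot_pow_dvd {k d : ℕ} (hd : IsFull k d) (hk : k ≠ 0) (hd0 : d ≠ 0) :
    d / Nat.floorRoot k d ^ k ∣ Nat.floorRoot k d ^ (k - 1) := by
  have ha0 : Nat.floorRoot k d ≠ 0 := Nat.floorRoot_ne_zero.2 ⟨hk, hd0⟩
  have hdvd : Nat.floorRoot k d ^ k ∣ d := Nat.floorRoot_pow_dvd
  have hc0 : d / Nat.floorRoot k d ^ k ≠ 0 :=
    (Nat.div_ne_zero_iff_of_dvd hdvd).2 ⟨hd0, pow_ne_zero _ ha0⟩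
  rw [← Nat.factorization_le_iff_dvd hc0 (pow_ne_zero _ ha0)]
  intro p
  simp only [Nat.factorization_div hdvd, Nat.factorization_pow, Nat.factorization_floorRoot,
    Finsupp.tsub_apply, Finsupp.smul_apply, Finsupp.floorDiv_apply, smul_eq_mul]
  set e := d.factorization p
  have he : e = 0 ∨ k ≤ e := by
    by_cases hp : p ∈ d.primeFactors
    · exact .inr <| ((Nat.prime_of_mem_primeFactors hp).pow_dvd_iff_le_factorization hd0).1
        (hd p hp)
    · exact .inl <| Finsupp.notMem_support_iff.1 hp
  rcases he with he | hke
  · simp [he]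
  have hq : 1 ≤ e / k := (Nat.one_le_div_iff (by omega)).2 hke
  calc e - k * (e / k) = e % k := by have := Nat.mod_add_div e k; omega
    _ ≤ k - 1 := by have := Nat.mod_lt e (Nat.pos_of_ne_zero hk); omega
    _ ≤ (k - 1) * (e / k) := Nat.le_mul_of_pos_right _ hq

lemma card_filter_isFull_le {k : ℕ} (hk : k ≠ 0) (N : ℕ) :
    #{d ∈ Icc 1 N | IsFull k d} ≤
      ∑ a ∈ Icc 1 N with a ^ k ≤ N, #(a ^ (k - 1)).divisors := by
  rw [← card_sigma]
  refine card_le_card_of_injOn (fun d => ⟨Nat.floorRoot k d, d / Nat.floorRoot k d ^ k⟩)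
    (fun d hd => ?_) (fun d hd d' hd' hdd' => ?_)
  · simp only [coe_filter, mem_Icc, Set.mem_ofPred_eq] at hd
    obtain ⟨⟨hd1, hdN⟩, hfull⟩ := hd
    have ha0 : Nat.floorRoot k d ≠ 0 := Nat.floorRoot_ne_zero.2 ⟨hk, by omega⟩
    have hakN : Nat.floorRoot k d ^ k ≤ N :=
      (Nat.le_of_dvd (by omega) Nat.floorRoot_pow_dvd).trans hdN
    simp only [coe_sigma, Set.mem_sigma_iff, coe_filter, mem_Icc, Set.mem_ofPred_eq,
      mem_coe, Nat.mem_divisors]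
    exact ⟨⟨⟨by omega, (Nat.le_self_pow hk _).trans hakN⟩, hakN⟩,
      hfull.div_floorRoot_pow_dvd hk (by omega), pow_ne_zero _ ha0⟩
  · simp only [Sigma.mk.injEq] at hdd'
    obtain ⟨ha, hc⟩ := hdd'
    calc d = Nat.floorRoot k d ^ k * (d / Nat.floorRoot k d ^ k) :=
          (Nat.mul_div_cancel' Nat.floorRoot_pow_dvd).symm
      _ = d' := by rw [eq_of_heq hc, ha, Nat.mul_div_cancel' Nat.floorRoot_pow_dvd]

theorem exists_card_filter_isFull_le {k : ℕ} (hk : k ≠ 0) {δ : ℝ} (hδ : 0 < δ) :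
    ∃ C : ℝ, ∀ N : ℕ,
      (#{d ∈ Icc 1 N | IsFull k d} : ℝ) ≤ C * (N : ℝ) ^ ((k⁻¹ : ℝ) + δ) := by
  obtain ⟨C, hC⟩ := exists_card_divisors_le_rpow hδ
  have hC0 : 0 ≤ C := zero_le_one.trans (by simpa using hC 1)
  refine ⟨C, fun N => ?_⟩
  have hτ : ∀ a ∈ ({a ∈ Icc 1 N | a ^ k ≤ N} : Finset ℕ),
      (#(a ^ (k - 1)).divisors : ℝ) ≤ C * (N : ℝ) ^ δ := by
    intro a ha
    obtain ⟨ha, hakN⟩ := mem_filter.1 ha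
    have : a ^ (k - 1) ≤ N := (Nat.pow_le_pow_right (mem_Icc.1 ha).1 (Nat.sub_le k 1)).trans hakN
    exact (hC _).trans (by gcongr)
  calc (#{d ∈ Icc 1 N | IsFull k d} : ℝ)
      ≤ ∑ a ∈ Icc 1 N with a ^ k ≤ N, (#(a ^ (k - 1)).divisors : ℝ) := by
        exact_mod_cast card_filter_isFull_le hk N
    _ ≤ #{a ∈ Icc 1 N | a ^ k ≤ N} * (C * (N : ℝ) ^ δ) := by
        simpa using sum_le_sum hτ
    _ ≤ (N : ℝ) ^ (k⁻¹ : ℝ) * (C * (N : ℝ) ^ δ) := by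
        gcongr
        exact card_filter_pow_le_le_rpow hk N
    _ = C * (N : ℝ) ^ ((k⁻¹ : ℝ) + δ) := by
        rw [rpow_add' (Nat.cast_nonneg N) (by positivity)]
        ring

theorem sum_Mk_sq_bound (k : ℕ) (hk : 2 ≤ k) (ε : ℝ) (hε : 0 < ε) :
    ∃ x₀ : ℝ, ∀ x : ℝ, x₀ ≤ x →
      (∑ n ∈ Finset.Icc 1 ⌊x⌋₊, (Mk k n : ℝ) ^ 2) ≤ x ^ ((2 : ℝ) + 1 / k + ε) := by
  obtain ⟨C, hC⟩ := exists_card_filter_isFull_le (k := k) (by omega) (half_pos hε)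
  obtain ⟨x₀, hx₀⟩ := Filter.eventually_atTop.1 <|
    ((tendsto_rpow_atTop (half_pos hε)).eventually_ge_atTop C).and (Filter.eventually_gt_atTop 0)
  refine ⟨x₀, fun x hx => ?_⟩
  obtain ⟨hCx, hx0⟩ := hx₀ x hx
  set N := ⌊x⌋₊
  have hNx : (N : ℝ) ≤ x := Nat.floor_le hx0.le
  have hsum : ∑ n ∈ Icc 1 N, Mk k n ^ 2 ≤ #{d ∈ Icc 1 N | IsFull k d} * N ^ 2 :=
    sum_sq_le_card_filter_mul_sq fun n hn =>
      Mk_mem_filter_divisors k (Nat.pos_iff_ne_zero.1 (mem_Icc.1 hn).1)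
  calc ∑ n ∈ Icc 1 N, (Mk k n : ℝ) ^ 2 ≤ #{d ∈ Icc 1 N | IsFull k d} * (N : ℝ) ^ 2 := by
        exact_mod_cast hsum
    _ ≤ C * (N : ℝ) ^ ((k⁻¹ : ℝ) + ε / 2) * (N : ℝ) ^ 2 := by gcongr; exact hC N
    _ ≤ x ^ (ε / 2) * x ^ ((k⁻¹ : ℝ) + ε / 2) * x ^ 2 := by gcongr
    _ = x ^ ((2 : ℝ) + 1 / k + ε) := by
        rw [← rpow_natCast, ← rpow_add hx0, ← rpow_add hx0]
        ring_nf
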